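/- arXiv:1002.0686 — 3 statements merged into one kernel-verified Lean document; each statement's English description precedes it below -/
import Mathlib

section
/- Let Q = (0,1)^{d−1} × (−1, 0), with S = [0,1]^{d−1} × {0}. Let ρ⁰, ρ¹ be probability measures on the closure of Q of the form ρⁱ = ρⁱ_Q + ρⁱ_S, where ρⁱ_Q has density bounded by k̄ on Q and ρⁱ_S is concentrated on S. Set ℓ = W₁(ρ⁰, ρ¹). Then for every Lipschitz function j on the closure of Q: ∫_S j d(ρ⁰_S − ρ¹_S) ≤ Lip(j)·ℓ + c(k̄)·‖j‖_∞ · ℓ^{1/2}, where c(k̄) is a constant depending only on k̄. -/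
open MeasureTheory
open scoped ENNReal NNReal

noncomputable def IsCoupling {d : ℕ} (γ : Measure (EuclideanSpace ℝ (Fin d) × EuclideanSpace ℝ (Fin d)))
    (μ ν : Measure (EuclideanSpace ℝ (Fin d))) : Prop :=
  γ.map Prod.fst = μ ∧ γ.map Prod.snd = ν

/-- The Wasserstein distance of order `p` (defined as an infimum over couplings). -/
noncomputable def Wass {d : ℕ} (p : ℝ) (μ ν : Measure (EuclideanSpace ℝ (Fin d))) : ℝ :=
  sInf { c : ℝ | ∃ γ : Measure (EuclideanSpace ℝ (Fin d) × EuclideanSpace ℝ (Fin d)),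
    IsCoupling γ μ ν ∧ c = (∫ z, dist z.1 z.2 ^ p ∂γ) ^ (1/p) }

/-- The open box `(0,1)^{d} × (-1,0)` in `ℝ^{d+1}`. -/
def boxQ (d : ℕ) : Set (EuclideanSpace ℝ (Fin (d+1))) :=
  {x | (∀ i : Fin d, x i.castSucc ∈ Set.Ioo (0:ℝ) 1) ∧ x (Fin.last d) ∈ Set.Ioo (-1:ℝ) 0}

/-- The top face `S = [0,1]^{d} × {0}` in `ℝ^{d+1}`. -/
def faceS (d : ℕ) : Set (EuclideanSpace ℝ (Fin (d+1))) :=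
  {x | (∀ i : Fin d, x i.castSucc ∈ Set.Icc (0:ℝ) 1) ∧ x (Fin.last d) = 0}

/-! Multiply `j` by the cutoff `χ_δ(x) = (1 + x_d/δ)₊`, which is `1` on `S`
and vanishes below the strip `{-δ < x_d}`. On `closure Q` the product is
`(Lip j + ‖j‖_∞/δ)`-Lipschitz, so duality for `W₁` bounds its integral against
`ρ⁰ - ρ¹` by `(Lip j + ‖j‖_∞/δ) ℓ`; its integral against each absolutely
continuous part is at most `k̄ ‖j‖_∞ δ`, as the strip meets `Q` in volume `δ`.
Hence the left-hand side is at most `Lip j ℓ + ‖j‖_∞ ℓ/δ + 2 k̄ ‖j‖_∞ δ`, and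
`δ ≈ ℓ^{1/2}` gives the claim. -/

open Set

def prism (d : ℕ) (I J : Set ℝ) : Set (EuclideanSpace ℝ (Fin (d+1))) :=
  {x | (∀ i : Fin d, x i.castSucc ∈ I) ∧ x (Fin.last d) ∈ J}

lemma prism_eq_preimage (d : ℕ) (I J : Set ℝ) :
    prism d I J = WithLp.ofLp ⁻¹' univ.pi (Fin.lastCases J fun _ => I) := by
  ext x
  simp [prism, Fin.forall_fin_succ', and_comm]

lemma closure_prism (d : ℕ) (I J : Set ℝ) :
    closure (prism d I J) = prism d (closure I) (closure J) := by
  rw [prism_eq_preimage, prism_eq_preimage]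
  refine ((PiLp.homeomorph 2 fun _ : Fin (d+1) => ℝ).preimage_closure _).symm.trans ?_
  rw [closure_pi_set]
  congr! with i
  induction i using Fin.lastCases <;> simp

lemma isCompact_prism (d : ℕ) {I J : Set ℝ} (hI : IsCompact I) (hJ : IsCompact J) :
    IsCompact (prism d I J) := by
  rw [prism_eq_preimage]
  refine (PiLp.homeomorph 2 fun _ : Fin (d+1) => ℝ).isCompact_preimage.2
    (isCompact_univ_pi fun i => ?_)
  induction i using Fin.lastCases <;> simpa

lemma measurableSet_prism (d : ℕ) {I J : Set ℝ} (hI : MeasurableSet I) (hJ : MeasurableSet J) :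
    MeasurableSet (prism d I J) := by
  rw [prism_eq_preimage]
  refine (MeasurableEquiv.toLp 2 (Fin (d+1) → ℝ)).symm.measurable (.univ_pi fun i => ?_)
  induction i using Fin.lastCases <;> simpa

lemma volume_prism (d : ℕ) (I J : Set ℝ) : volume (prism d I J) = volume I ^ d * volume J := by
  rw [prism_eq_preimage]
  refine ((EuclideanSpace.volume_preserving_symm_measurableEquiv_toLp _).measure_preimage_equiv
    _).trans ?_
  rw [volume_pi_pi, Fin.prod_univ_castSucc]
  simp

lemma prism_mono (d : ℕ) {I I' J J' : Set ℝ} (hI : I ⊆ I') (hJ : J ⊆ J') :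
    prism d I J ⊆ prism d I' J' :=
  fun _ hx => ⟨fun i => hI (hx.1 i), hJ hx.2⟩

lemma boxQ_eq_prism (d : ℕ) : boxQ d = prism d (Ioo 0 1) (Ioo (-1) 0) := rfl

lemma closure_boxQ (d : ℕ) : closure (boxQ d) = prism d (Icc 0 1) (Icc (-1) 0) := by
  rw [boxQ_eq_prism, closure_prism, closure_Ioo zero_ne_one, closure_Ioo (by norm_num)]

lemma isCompact_closure_boxQ (d : ℕ) : IsCompact (closure (boxQ d)) := by
  rw [closure_boxQ]
  exact isCompact_prism d isCompact_Icc isCompact_Icc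

lemma faceS_subset_closure_boxQ (d : ℕ) : faceS d ⊆ closure (boxQ d) := by
  rw [closure_boxQ]
  exact prism_mono d subset_rfl (singleton_subset_iff.2 (by norm_num : (0 : ℝ) ∈ Icc (-1) 0))

lemma measurableSet_boxQ (d : ℕ) : MeasurableSet (boxQ d) :=
  measurableSet_prism d measurableSet_Ioo measurableSet_Ioo

lemma volume_boxQ_inter_le (d : ℕ) (δ : ℝ≥0) :
    volume (boxQ d ∩ {x | -(δ : ℝ) < x (Fin.last d)}) ≤ δ := by
  calc volume (boxQ d ∩ {x | -(δ : ℝ) < x (Fin.last d)})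
      ≤ volume (prism d (Ioo 0 1) (Ioo (-δ) 0)) :=
        measure_mono fun x hx => ⟨hx.1.1, hx.2, hx.1.2.2⟩
    _ = δ := by simp [volume_prism, Real.volume_Ioo]

lemma lipschitzWith_lastCoord (d : ℕ) :
    LipschitzWith 1 fun x : EuclideanSpace ℝ (Fin (d+1)) => x (Fin.last d) :=
  LipschitzWith.of_edist_le fun x y => PiLp.edist_apply_le x y _

lemma LipschitzOnWith.mul_of_abs_le {α : Type*} [PseudoMetricSpace α] {f g : α → ℝ}
    {s : Set α} {Kf Kg Mf Mg : ℝ≥0} (hf : LipschitzOnWith Kf f s) (hg : LipschitzOnWith Kg g s)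
    (hfM : ∀ x ∈ s, |f x| ≤ Mf) (hgM : ∀ x ∈ s, |g x| ≤ Mg) :
    LipschitzOnWith (Mf * Kg + Mg * Kf) (fun x => f x * g x) s := by
  refine LipschitzOnWith.of_dist_le_mul fun x hx y hy => ?_
  have hfxy := hf.dist_le_mul x hx y hy
  have hgxy := hg.dist_le_mul x hx y hy
  rw [Real.dist_eq] at hfxy hgxy ⊢
  calc |f x * g x - f y * g y| = |f x * (g x - g y) + g y * (f x - f y)| := by ring_nf
    _ ≤ |f x| * |g x - g y| + |g y| * |f x - f y| := by
        rw [← abs_mul, ← abs_mul]; exact abs_add_le _ _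
    _ ≤ Mf * (Kg * dist x y) + Mg * (Kf * dist x y) := by
        gcongr
        exacts [hfM x hx, hgM y hy]
    _ = ↑(Mf * Kg + Mg * Kf) * dist x y := by push_cast; ring

noncomputable def cutoff (δ : ℝ≥0) (t : ℝ) : ℝ := max (1 + t / δ) 0

lemma cutoff_zero (δ : ℝ≥0) : cutoff δ 0 = 1 := by simp [cutoff]

lemma cutoff_nonneg (δ : ℝ≥0) (t : ℝ) : 0 ≤ cutoff δ t := le_max_right _ _

lemma cutoff_le_one (δ : ℝ≥0) {t : ℝ} (ht : t ≤ 0) : cutoff δ t ≤ 1 :=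
  max_le (by linarith [div_nonpos_of_nonpos_of_nonneg ht δ.coe_nonneg]) zero_le_one

lemma cutoff_eq_zero {δ : ℝ≥0} (hδ : 0 < δ) {t : ℝ} (ht : t ≤ -δ) :
    cutoff δ t = 0 := by
  have : t / δ ≤ -1 := by rw [div_le_iff₀ (by exact_mod_cast hδ)]; linarith
  exact max_eq_right (by linarith)

lemma lipschitzWith_cutoff (δ : ℝ≥0) : LipschitzWith δ⁻¹ (cutoff δ) := by
  refine LipschitzWith.max_const (LipschitzWith.of_dist_le_mul fun s t => ?_) 0
  rw [Real.dist_eq, Real.dist_eq, NNReal.coe_inv, add_sub_add_left_eq_sub, ← sub_div, abs_div,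
    NNReal.abs_eq, div_eq_inv_mul]

lemma lastCoord_nonpos_of_mem_closure_boxQ {d : ℕ} {x : EuclideanSpace ℝ (Fin (d+1))}
    (hx : x ∈ closure (boxQ d)) : x (Fin.last d) ≤ 0 := by
  rw [closure_boxQ] at hx
  exact hx.2.2

lemma lipschitzOnWith_mul_cutoff {d : ℕ} {j : EuclideanSpace ℝ (Fin (d+1)) → ℝ}
    {Lj B : ℝ≥0} (hj : LipschitzWith Lj j) (hjB : ∀ x ∈ closure (boxQ d), |j x| ≤ B) (δ : ℝ≥0) :
    LipschitzOnWith (Lj + B * δ⁻¹) (fun x => j x * cutoff δ (x (Fin.last d)))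
      (closure (boxQ d)) := by
  have hχ : LipschitzOnWith δ⁻¹ (fun x => cutoff δ (x (Fin.last d))) (closure (boxQ d)) := by
    simpa only [mul_one, Function.comp_def] using
      ((lipschitzWith_cutoff δ).comp (lipschitzWith_lastCoord d)).lipschitzOnWith
  have hχ1 : ∀ x ∈ closure (boxQ d), |cutoff δ (x (Fin.last d))| ≤ (1 : ℝ≥0) := by
    intro x hx
    rw [abs_of_nonneg (cutoff_nonneg δ _), NNReal.coe_one]
    exact cutoff_le_one δ (lastCoord_nonpos_of_mem_closure_boxQ hx)
  have := hj.lipschitzOnWith.mul_of_abs_le hχ hjB hχ1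
  rwa [one_mul, add_comm (B * δ⁻¹)] at this

lemma integrable_of_ae_mem_isCompact {X E : Type*} [TopologicalSpace X] [T2Space X]
    [MeasurableSpace X] [OpensMeasurableSpace X] [NormedAddCommGroup E] {μ : Measure X}
    [IsFiniteMeasure μ] {K : Set X} (hK : IsCompact K) (hμK : ∀ᵐ x ∂μ, x ∈ K)
    {f : X → E} (hf : ContinuousOn f K) : Integrable f μ := by
  simpa [IntegrableOn, Measure.restrict_eq_self_of_ae_mem hμK] using
    hf.integrableOn_compact (μ := μ) hK

lemma withDensity_le_smul_of_ae_le {X : Type*} [MeasurableSpace X] {μ : Measure X}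
    {f : X → ℝ≥0∞} {k : ℝ≥0∞} (hf : ∀ᵐ x ∂μ, f x ≤ k) :
    μ.withDensity f ≤ k • μ :=
  (withDensity_mono hf).trans_eq (withDensity_const k)

section Cutoff

variable {d : ℕ} {k B δ : ℝ≥0} {ρQ ρS : Measure (EuclideanSpace ℝ (Fin (d+1)))}
  {j : EuclideanSpace ℝ (Fin (d+1)) → ℝ}

lemma ae_mem_boxQ (hQ : ρQ ≤ (k : ℝ≥0∞) • volume.restrict (boxQ d)) :
    ∀ᵐ x ∂ρQ, x ∈ boxQ d :=
  (Measure.absolutelyContinuous_of_le_smul hQ).ae_le (ae_restrict_mem (measurableSet_boxQ d))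

lemma ae_mem_closure_boxQ (hQ : ρQ ≤ (k : ℝ≥0∞) • volume.restrict (boxQ d))
    (hS : ∀ᵐ x ∂ρS, x ∈ faceS d) : ∀ᵐ x ∂(ρQ + ρS), x ∈ closure (boxQ d) :=
  ae_add_measure_iff.2 ⟨(ae_mem_boxQ hQ).mono fun _ hx => subset_closure hx,
    hS.mono fun _ hx => faceS_subset_closure_boxQ d hx⟩

lemma measure_lastCoord_gt_le (hQ : ρQ ≤ (k : ℝ≥0∞) • volume.restrict (boxQ d)) :
    ρQ {x | -(δ : ℝ) < x (Fin.last d)} ≤ ↑(k * δ) := by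
  set t := {x : EuclideanSpace ℝ (Fin (d+1)) | -(δ : ℝ) < x (Fin.last d)}
  have ht : MeasurableSet t :=
    measurableSet_lt measurable_const (lipschitzWith_lastCoord d).continuous.measurable
  calc ρQ t ≤ ((k : ℝ≥0∞) • volume.restrict (boxQ d)) t := hQ t
    _ = k * volume (boxQ d ∩ t) := by
        rw [Measure.smul_apply, Measure.restrict_apply ht, smul_eq_mul, inter_comm]
    _ ≤ k * δ := by gcongr; exact volume_boxQ_inter_le d δ
    _ = ↑(k * δ) := (ENNReal.coe_mul k δ).symm

lemma abs_integral_mul_cutoff_le (hQ : ρQ ≤ (k : ℝ≥0∞) • volume.restrict (boxQ d))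
    (hjB : ∀ x ∈ closure (boxQ d), |j x| ≤ B) (hδ : 0 < δ) :
    |∫ x, j x * cutoff δ (x (Fin.last d)) ∂ρQ| ≤ k * B * δ := by
  have hstrip := measure_lastCoord_gt_le (δ := δ) hQ
  have hbound : ∀ᵐ x ∂ρQ, ‖j x * cutoff δ (x (Fin.last d))‖ ≤ B := by
    filter_upwards [ae_mem_boxQ hQ] with x hx
    rw [Real.norm_eq_abs, abs_mul, abs_of_nonneg (cutoff_nonneg δ _)]
    have hx' := subset_closure hx
    exact mul_le_of_le_one_right (abs_nonneg _) (cutoff_le_one δ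
      (lastCoord_nonpos_of_mem_closure_boxQ hx'))
      |>.trans (hjB x hx')
  rw [← setIntegral_eq_integral_of_forall_compl_eq_zero (s := {x | -(δ : ℝ) < x (Fin.last d)})
    fun x hx => by rw [cutoff_eq_zero hδ (not_lt.1 hx), mul_zero], ← Real.norm_eq_abs]
  calc _ ≤ (B : ℝ) * ρQ.real {x | -(δ : ℝ) < x (Fin.last d)} :=
        norm_setIntegral_le_of_norm_le_const_ae (hstrip.trans_lt ENNReal.coe_lt_top)
          (ae_restrict_of_ae hbound)
    _ ≤ B * (k * δ) := by
        gcongr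
        simpa [measureReal_def] using ENNReal.toReal_mono ENNReal.coe_ne_top hstrip
    _ = k * B * δ := by ring

lemma abs_integral_mul_cutoff_sub_integral_le
    (hQ : ρQ ≤ (k : ℝ≥0∞) • volume.restrict (boxQ d)) (hS : ∀ᵐ x ∂ρS, x ∈ faceS d)
    [IsFiniteMeasure (ρQ + ρS)] (hj : Continuous j)
    (hjB : ∀ x ∈ closure (boxQ d), |j x| ≤ B) (hδ : 0 < δ) :
    |∫ x, j x * cutoff δ (x (Fin.last d)) ∂(ρQ + ρS) - ∫ x, j x ∂ρS| ≤
      k * B * δ := by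
  have : IsFiniteMeasure ρQ := isFiniteMeasure_of_le (ρQ + ρS) (Measure.le_add_right le_rfl)
  have : IsFiniteMeasure ρS := isFiniteMeasure_of_le (ρQ + ρS) (Measure.le_add_left le_rfl)
  have hg : Continuous fun x : EuclideanSpace ℝ (Fin (d+1)) =>
      j x * cutoff δ (x (Fin.last d)) :=
    hj.mul ((lipschitzWith_cutoff δ).continuous.comp (lipschitzWith_lastCoord d).continuous)
  have hK := isCompact_closure_boxQ d
  have hgQ : Integrable (fun x => j x * cutoff δ (x (Fin.last d))) ρQ :=
    integrable_of_ae_mem_isCompact hK ((ae_mem_boxQ hQ).mono fun _ hx => subset_closure hx)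
      hg.continuousOn
  have hgS : Integrable (fun x => j x * cutoff δ (x (Fin.last d))) ρS :=
    integrable_of_ae_mem_isCompact hK (hS.mono fun _ hx => faceS_subset_closure_boxQ d hx)
      hg.continuousOn
  have hface : ∫ x, j x * cutoff δ (x (Fin.last d)) ∂ρS = ∫ x, j x ∂ρS :=
    integral_congr_ae (hS.mono fun x hx => by simp [hx.2, cutoff_zero])
  rw [integral_add_measure hgQ hgS, hface, add_sub_cancel_right]
  exact abs_integral_mul_cutoff_le hQ hjB hδ

end Cutoff

lemma Wass_nonneg {d : ℕ} (p : ℝ) (μ ν : Measure (EuclideanSpace ℝ (Fin d))) :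
    0 ≤ Wass p μ ν :=
  Real.sInf_nonneg fun _ ⟨_, _, hc⟩ =>
    hc ▸ Real.rpow_nonneg (integral_nonneg fun _ => Real.rpow_nonneg dist_nonneg _) _

lemma IsCoupling.integral_sub_integral_le {d : ℕ}
    {γ : Measure (EuclideanSpace ℝ (Fin d) × EuclideanSpace ℝ (Fin d))}
    {μ ν : Measure (EuclideanSpace ℝ (Fin d))} (hγ : IsCoupling γ μ ν) [IsFiniteMeasure μ]
    {K : Set (EuclideanSpace ℝ (Fin d))} (hK : IsCompact K) (hμK : ∀ᵐ x ∂μ, x ∈ K)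
    (hνK : ∀ᵐ x ∂ν, x ∈ K) {g : EuclideanSpace ℝ (Fin d) → ℝ} {L : ℝ≥0}
    (hg : LipschitzOnWith L g K) :
    ∫ x, g x ∂μ - ∫ x, g x ∂ν ≤ L * ∫ z, dist z.1 z.2 ∂γ := by
  obtain ⟨rfl, rfl⟩ := hγ
  have : IsFiniteMeasure γ := Measure.isFiniteMeasure_of_map measurable_fst.aemeasurable
  have h1 : ∀ᵐ z ∂γ, z.1 ∈ K := ae_of_ae_map measurable_fst.aemeasurable hμK
  have h2 : ∀ᵐ z ∂γ, z.2 ∈ K := ae_of_ae_map measurable_snd.aemeasurable hνK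
  have hgμ : Integrable g (γ.map Prod.fst) :=
    integrable_of_ae_mem_isCompact hK hμK hg.continuousOn
  have hgν : Integrable g (γ.map Prod.snd) :=
    integrable_of_ae_mem_isCompact hK hνK hg.continuousOn
  have hdist : Integrable (fun z => dist z.1 z.2) γ :=
    integrable_of_ae_mem_isCompact (hK.prod hK) (h1.and h2) continuous_dist.continuousOn
  have hg1 : Integrable (fun z => g z.1) γ := hgμ.comp_measurable measurable_fst
  have hg2 : Integrable (fun z => g z.2) γ := hgν.comp_measurable measurable_snd
  rw [integral_map measurable_fst.aemeasurable hgμ.aestronglyMeasurable,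
    integral_map measurable_snd.aemeasurable hgν.aestronglyMeasurable,
    ← integral_sub hg1 hg2, ← integral_const_mul]
  refine integral_mono_ae (hg1.sub hg2) (hdist.const_mul _) ?_
  filter_upwards [h1, h2] with z hz1 hz2
  exact (le_abs_self _).trans (by simpa [Real.dist_eq] using hg.dist_le_mul _ hz1 _ hz2)

lemma integral_sub_integral_le_mul_Wass {d : ℕ} {μ ν : Measure (EuclideanSpace ℝ (Fin d))}
    [IsProbabilityMeasure μ] [IsProbabilityMeasure ν] {K : Set (EuclideanSpace ℝ (Fin d))}
    (hK : IsCompact K) (hμK : ∀ᵐ x ∂μ, x ∈ K) (hνK : ∀ᵐ x ∂ν, x ∈ K)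
    {g : EuclideanSpace ℝ (Fin d) → ℝ} {L : ℝ≥0} (hg : LipschitzOnWith L g K) :
    ∫ x, g x ∂μ - ∫ x, g x ∂ν ≤ L * Wass 1 μ ν := by
  have hne : {c : ℝ | ∃ γ, IsCoupling γ μ ν ∧
      c = (∫ z, dist z.1 z.2 ^ (1 : ℝ) ∂γ) ^ (1 / (1 : ℝ))}.Nonempty :=
    ⟨_, μ.prod ν, ⟨by simp [Measure.map_fst_prod], by simp [Measure.map_snd_prod]⟩, rfl⟩
  rw [Wass, ← smul_eq_mul, ← Real.sInf_smul_of_nonneg L.coe_nonneg]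
  refine le_csInf hne.smul_set ?_
  rintro _ ⟨_, ⟨γ, hγ, rfl⟩, rfl⟩
  simpa using hγ.integral_sub_integral_le hK hμK hνK hg

lemma le_add_mul_sqrt_of_forall_le {a b A C ℓ : ℝ} (hA : 0 ≤ A) (hC : 0 ≤ C)
    (hℓ : 0 ≤ ℓ) (h : ∀ δ : ℝ≥0, 0 < δ → a ≤ b + A * ℓ / δ + C * δ) :
    a ≤ b + (A + C) * √ℓ := by
  refine le_of_forall_pos_le_add fun ε hε => ?_
  set η := ε / (C + 1)
  have hη : 0 < η := by positivity
  have hδ : 0 < √ℓ + η := by positivity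
  have hℓδ : ℓ / (√ℓ + η) ≤ √ℓ := by
    rw [div_le_iff₀ hδ]
    nlinarith [Real.mul_self_sqrt hℓ, Real.sqrt_nonneg ℓ]
  have hCη : C * η ≤ ε := by
    rw [mul_div_assoc', div_le_iff₀ (by positivity)]
    nlinarith
  have key : a ≤ b + A * ℓ / (√ℓ + η) + C * (√ℓ + η) :=
    h ⟨√ℓ + η, hδ.le⟩ hδ
  nlinarith [mul_le_mul_of_nonneg_left hℓδ hA, mul_div_assoc A ℓ (√ℓ + η)]

lemma integral_sub_integral_le_of_cutoff {d : ℕ} {k B Lj δ : ℝ≥0}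
    {ρ0Q ρ1Q ρ0S ρ1S : Measure (EuclideanSpace ℝ (Fin (d+1)))}
    (hQ0 : ρ0Q ≤ (k : ℝ≥0∞) • volume.restrict (boxQ d))
    (hQ1 : ρ1Q ≤ (k : ℝ≥0∞) • volume.restrict (boxQ d))
    (hS0 : ∀ᵐ x ∂ρ0S, x ∈ faceS d) (hS1 : ∀ᵐ x ∂ρ1S, x ∈ faceS d)
    [IsProbabilityMeasure (ρ0Q + ρ0S)] [IsProbabilityMeasure (ρ1Q + ρ1S)]
    {j : EuclideanSpace ℝ (Fin (d+1)) → ℝ} (hj : LipschitzWith Lj j)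
    (hjB : ∀ x ∈ closure (boxQ d), |j x| ≤ B) (hδ : 0 < δ) :
    ∫ x, j x ∂ρ0S - ∫ x, j x ∂ρ1S ≤
      Lj * Wass 1 (ρ0Q + ρ0S) (ρ1Q + ρ1S) + B * Wass 1 (ρ0Q + ρ0S) (ρ1Q + ρ1S) / δ
        + 2 * k * B * δ := by
  have hdual := integral_sub_integral_le_mul_Wass (isCompact_closure_boxQ d)
    (ae_mem_closure_boxQ hQ0 hS0) (ae_mem_closure_boxQ hQ1 hS1)
    (lipschitzOnWith_mul_cutoff hj hjB δ)
  have h0 := abs_le.1 (abs_integral_mul_cutoff_sub_integral_le hQ0 hS0 hj.continuous hjB hδ)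
  have h1 := abs_le.1 (abs_integral_mul_cutoff_sub_integral_le hQ1 hS1 hj.continuous hjB hδ)
  have hL : ((Lj + B * δ⁻¹ : ℝ≥0) : ℝ) * Wass 1 (ρ0Q + ρ0S) (ρ1Q + ρ1S) =
      Lj * Wass 1 (ρ0Q + ρ0S) (ρ1Q + ρ1S) + B * Wass 1 (ρ0Q + ρ0S) (ρ1Q + ρ1S) / δ := by
    push_cast; ring
  linarith

theorem stmt2_general (d : ℕ) (kbar : ℝ) :
    ∃ c : ℝ, 0 ≤ c ∧
      ∀ (ρ0Q ρ1Q ρ0S ρ1S : Measure (EuclideanSpace ℝ (Fin (d+1))))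
        (f0 f1 : EuclideanSpace ℝ (Fin (d+1)) → ℝ≥0∞),
        ρ0Q = (volume.restrict (boxQ d)).withDensity f0 →
        ρ1Q = (volume.restrict (boxQ d)).withDensity f1 →
        (∀ᵐ x ∂(volume.restrict (boxQ d)), f0 x ≤ ENNReal.ofReal kbar) →
        (∀ᵐ x ∂(volume.restrict (boxQ d)), f1 x ≤ ENNReal.ofReal kbar) →
        ρ0S (faceS d)ᶜ = 0 → ρ1S (faceS d)ᶜ = 0 →
        IsProbabilityMeasure (ρ0Q + ρ0S) → IsProbabilityMeasure (ρ1Q + ρ1S) →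
        ∀ (j : EuclideanSpace ℝ (Fin (d+1)) → ℝ) (Lj B : ℝ≥0),
          LipschitzWith Lj j → (∀ x ∈ closure (boxQ d), |j x| ≤ B) →
          (∫ x, j x ∂ρ0S) - (∫ x, j x ∂ρ1S) ≤
            (Lj : ℝ) * Wass 1 (ρ0Q + ρ0S) (ρ1Q + ρ1S)
              + c * B * (Wass 1 (ρ0Q + ρ0S) (ρ1Q + ρ1S)) ^ (1/2 : ℝ) := by
  set k := kbar.toNNReal
  refine ⟨2 * k + 1, by positivity, ?_⟩
  intro ρ0Q ρ1Q ρ0S ρ1S f0 f1 h0Q h1Q hf0 hf1 h0S h1S _ _ j Lj B hj hjB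
  have hQ0 : ρ0Q ≤ (k : ℝ≥0∞) • volume.restrict (boxQ d) := by
    rw [h0Q]; exact withDensity_le_smul_of_ae_le hf0
  have hQ1 : ρ1Q ≤ (k : ℝ≥0∞) • volume.restrict (boxQ d) := by
    rw [h1Q]; exact withDensity_le_smul_of_ae_le hf1
  have key := le_add_mul_sqrt_of_forall_le B.coe_nonneg (by positivity : (0 : ℝ) ≤ 2 * k * B)
    (Wass_nonneg 1 _ _) fun δ hδ =>
      integral_sub_integral_le_of_cutoff hQ0 hQ1 (ae_iff.2 h0S) (ae_iff.2 h1S) hj hjB hδ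
  rw [← Real.sqrt_eq_rpow]
  linarith

theorem stmt2 (d : ℕ) (kbar : ℝ) (hk : 0 < kbar) :
    ∃ c : ℝ, 0 ≤ c ∧
      ∀ (ρ0Q ρ1Q ρ0S ρ1S : Measure (EuclideanSpace ℝ (Fin (d+1))))
        (f0 f1 : EuclideanSpace ℝ (Fin (d+1)) → ℝ≥0∞),
        ρ0Q = (volume.restrict (boxQ d)).withDensity f0 →
        ρ1Q = (volume.restrict (boxQ d)).withDensity f1 →
        (∀ᵐ x ∂(volume.restrict (boxQ d)), f0 x ≤ ENNReal.ofReal kbar) →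
        (∀ᵐ x ∂(volume.restrict (boxQ d)), f1 x ≤ ENNReal.ofReal kbar) →
        ρ0S (faceS d)ᶜ = 0 → ρ1S (faceS d)ᶜ = 0 →
        IsProbabilityMeasure (ρ0Q + ρ0S) → IsProbabilityMeasure (ρ1Q + ρ1S) →
        ∀ (j : EuclideanSpace ℝ (Fin (d+1)) → ℝ) (Lj B : ℝ≥0),
          LipschitzWith Lj j → (∀ x ∈ closure (boxQ d), |j x| ≤ B) →
          (∫ x, j x ∂ρ0S) - (∫ x, j x ∂ρ1S) ≤
            (Lj : ℝ) * Wass 1 (ρ0Q + ρ0S) (ρ1Q + ρ1S)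
              + c * B * (Wass 1 (ρ0Q + ρ0S) (ρ1Q + ρ1S)) ^ (1/2 : ℝ) :=
  stmt2_general d kbar
end

section
/- Let Ω ⊂ ℝ^d be a bounded domain, Γ_out a portion of its boundary, and suppose there is a constant c > 0 such that for all t > 0, the Lebesgue measure of {x ∈ Ω : d(x, Γ_out) ≤ t} is at most c·t. Let μ, ν be admissible measures (each the sum of an absolutely continuous part on Ω with density ≤ 1 and a singular part on Γ_out), and set E = |μ(Γ_out) − ν(Γ_out)|. Then E ≤ C·W₂(μ, ν)^{2/3}, where C depends only on c and the geometry. -/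
/-!
Let `γ` be a coupling of `μ` and `ν` with `μ(Γ) - ν(Γ) = E > 0`. At least `E` of the mass of `γ`
leaves (a measurable hull of) `Γ`, and it arrives where `ν` is absolutely continuous with density
at most `1`. By the layer bound at most `c t` of it arrives within distance `t` of `Γ`, so for
`t = E / (2c)` at least `E / 2` travels farther than `t`: the cost is at least
`t ^ 2 * E / 2 = E ^ 3 / (8 c ^ 2)`, i.e. `W₂ ^ 2 ≥ E ^ 3 / (8 c ^ 2)`.
-/

open MeasureTheory
open scoped ENNReal NNReal

open Set Metric

/-- With `t = m / (2c)` the layer `{f ≤ t}` holds at most half of the mass of `σ`, and the rest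
contributes at least `t ^ 2 * m / 2` (Markov). -/
theorem ofReal_cube_div_le_lintegral_sq {α : Type*} [MeasurableSpace α] {σ ρ : Measure α}
    {f : α → ℝ} {c m : ℝ} (hc : 0 < c) (hf : Measurable f) (hσρ : σ ≤ ρ)
    (hlayer : ∀ t, 0 < t → ρ {x | f x ≤ t} ≤ ENNReal.ofReal (c * t))
    (hm : ENNReal.ofReal m ≤ σ univ) :
    ENNReal.ofReal (m ^ 3 / (8 * c ^ 2)) ≤ ∫⁻ x, ENNReal.ofReal (f x ^ 2) ∂σ := by
  rcases le_or_gt m 0 with hm0 | hm0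
  · rw [ENNReal.ofReal_of_nonpos (div_nonpos_of_nonpos_of_nonneg (by nlinarith [sq_nonneg m])
      (by positivity))]
    exact zero_le
  set t := m / (2 * c) with ht_def
  have ht : 0 < t := by positivity
  have hnear : σ {x | f x ≤ t} ≤ ENNReal.ofReal (m / 2) :=
    calc σ {x | f x ≤ t} ≤ ρ {x | f x ≤ t} := hσρ _
      _ ≤ ENNReal.ofReal (c * t) := hlayer t ht
      _ = ENNReal.ofReal (m / 2) := by rw [ht_def]; field_simp
  have hfar : ENNReal.ofReal (m / 2) ≤ σ {x | t < f x} := by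
    refine (ENNReal.add_le_add_iff_left (ENNReal.ofReal_ne_top (r := m / 2))).1 ?_
    calc ENNReal.ofReal (m / 2) + ENNReal.ofReal (m / 2) = ENNReal.ofReal m := by
          rw [← ENNReal.ofReal_add (by positivity) (by positivity)]; ring_nf
      _ ≤ σ univ := hm
      _ ≤ σ {x | f x ≤ t} + σ {x | t < f x} :=
          (measure_mono fun x _ => le_or_gt (f x) t).trans (measure_union_le _ _)
      _ ≤ ENNReal.ofReal (m / 2) + σ {x | t < f x} := by gcongr
  calc ENNReal.ofReal (m ^ 3 / (8 * c ^ 2))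
      = ENNReal.ofReal (t ^ 2) * ENNReal.ofReal (m / 2) := by
        rw [← ENNReal.ofReal_mul (by positivity), ht_def]; ring_nf
    _ ≤ ENNReal.ofReal (t ^ 2) * σ {x | ENNReal.ofReal (t ^ 2) ≤ ENNReal.ofReal (f x ^ 2)} := by
        refine mul_le_mul_right (hfar.trans (measure_mono fun x hx => ?_)) _
        exact ENNReal.ofReal_le_ofReal (pow_le_pow_left₀ ht.le hx.le 2)
    _ ≤ ∫⁻ x, ENNReal.ofReal (f x ^ 2) ∂σ := mul_meas_ge_le_lintegral (by fun_prop) _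

/-- The set `K` of the paper. `μΩ ≤ volume.restrict Ω` encodes an absolutely continuous part on `Ω`
with density at most `1`. -/
def IsAdmissible {α : Type*} [MeasureSpace α] (Ω Γ : Set α) (μ : Measure α) : Prop :=
  ∃ μΩ μS : Measure α, μ = μΩ + μS ∧ μΩ ≤ volume.restrict Ω ∧ μS Γᶜ = 0

namespace IsAdmissible

variable {α : Type*} [MeasureSpace α] {Ω Γ : Set α} {μ : Measure α}

theorem of_withDensity {μΩ μS : Measure α} {f : α → ℝ≥0∞} (hμ : μ = μΩ + μS)
    (hμΩ : μΩ = (volume.restrict Ω).withDensity f) (hf : ∀ᵐ x ∂(volume.restrict Ω), f x ≤ 1)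
    (hμS : μS Γᶜ = 0) : IsAdmissible Ω Γ μ :=
  ⟨μΩ, μS, hμ, hμΩ ▸ (withDensity_mono hf).trans_eq withDensity_one, hμS⟩

theorem restrict_compl_le (hμ : IsAdmissible Ω Γ μ) {G : Set α} (hΓG : Γ ⊆ G) :
    μ.restrict Gᶜ ≤ volume.restrict Ω := by
  obtain ⟨μΩ, μS, rfl, hμΩ, hμS⟩ := hμ
  rw [Measure.restrict_add,
    Measure.restrict_eq_zero.2 (measure_mono_null (compl_subset_compl.2 hΓG) hμS), add_zero]
  exact Measure.restrict_le_self.trans hμΩ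

theorem measure_compl_closure [TopologicalSpace α] [OpensMeasurableSpace α]
    (hμ : IsAdmissible Ω Γ μ) (hΓ : Γ ⊆ closure Ω) : μ (closure Ω)ᶜ = 0 := by
  refine nonpos_iff_eq_zero.1 ?_
  calc μ (closure Ω)ᶜ = μ.restrict (closure Ω)ᶜ (closure Ω)ᶜ :=
        (Measure.restrict_apply_self _ _).symm
    _ ≤ volume.restrict Ω (closure Ω)ᶜ := hμ.restrict_compl_le hΓ _
    _ = 0 := by
        rw [Measure.restrict_apply isClosed_closure.measurableSet.compl]
        exact measure_mono_null (fun x hx => hx.1 (subset_closure hx.2)) measure_empty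

end IsAdmissible

theorem lintegral_dist_sq_map_swap {β : Type*} [PseudoMetricSpace β] [MeasurableSpace β]
    (γ : Measure (β × β)) :
    ∫⁻ z, ENNReal.ofReal (dist z.1 z.2 ^ 2) ∂(γ.map Prod.swap) =
      ∫⁻ z, ENNReal.ofReal (dist z.1 z.2 ^ 2) ∂γ := by
  rw [show (Prod.swap : β × β → β × β) = MeasurableEquiv.prodComm from rfl, lintegral_map_equiv]
  exact lintegral_congr fun z => by rw [dist_comm]; rfl

namespace IsCoupling

variable {d : ℕ} {μ ν : Measure (EuclideanSpace ℝ (Fin d))}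
  {γ : Measure (EuclideanSpace ℝ (Fin d) × EuclideanSpace ℝ (Fin d))}

theorem apply_prod_univ (hγ : IsCoupling γ μ ν) {s : Set (EuclideanSpace ℝ (Fin d))}
    (hs : MeasurableSet s) : γ (s ×ˢ univ) = μ s := by
  rw [← hγ.1, Measure.map_apply measurable_fst hs, prod_univ]

theorem apply_univ_prod (hγ : IsCoupling γ μ ν) {s : Set (EuclideanSpace ℝ (Fin d))}
    (hs : MeasurableSet s) : γ (univ ×ˢ s) = ν s := by
  rw [← hγ.2, Measure.map_apply measurable_snd hs, univ_prod]

theorem swap (hγ : IsCoupling γ μ ν) : IsCoupling (γ.map Prod.swap) ν μ := by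
  constructor
  · rw [Measure.map_map measurable_fst measurable_swap]; exact hγ.2
  · rw [Measure.map_map measurable_snd measurable_swap]; exact hγ.1

theorem isFiniteMeasure [IsFiniteMeasure μ] (hγ : IsCoupling γ μ ν) : IsFiniteMeasure γ :=
  ⟨by rw [← univ_prod_univ, hγ.apply_prod_univ .univ]; exact measure_lt_top μ univ⟩

theorem sub_le_apply_prod_compl (hγ : IsCoupling γ μ ν) {G : Set (EuclideanSpace ℝ (Fin d))}
    (hG : MeasurableSet G) : μ G - ν G ≤ γ (G ×ˢ Gᶜ) := by
  rw [tsub_le_iff_right, ← hγ.apply_prod_univ hG, ← hγ.apply_univ_prod hG, ← union_compl_self G,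
    prod_union, union_compl_self]
  exact (measure_union_le _ _).trans
    (by rw [add_comm]; gcongr; exact subset_univ G)

theorem integrable_dist_sq [IsFiniteMeasure μ] (hγ : IsCoupling γ μ ν)
    {K : Set (EuclideanSpace ℝ (Fin d))} (hK : Bornology.IsBounded K) (hμK : μ Kᶜ = 0)
    (hνK : ν Kᶜ = 0) : Integrable (fun z => dist z.1 z.2 ^ 2) γ := by
  have := hγ.isFiniteMeasure
  have h1 : ∀ᵐ z ∂γ, z.1 ∈ K :=
    ae_of_ae_map measurable_fst.aemeasurable (p := (· ∈ K)) (by rw [hγ.1]; exact hμK)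
  have h2 : ∀ᵐ z ∂γ, z.2 ∈ K :=
    ae_of_ae_map measurable_snd.aemeasurable (p := (· ∈ K)) (by rw [hγ.2]; exact hνK)
  refine Integrable.of_bound (by fun_prop) (diam K ^ 2) ?_
  filter_upwards [h1, h2] with z hz1 hz2
  rw [Real.norm_of_nonneg (by positivity)]
  exact pow_le_pow_left₀ dist_nonneg (dist_le_diam_of_mem hK hz1 hz2) 2

/-- The mass `μ G - ν G` that `γ` carries out of `G` lands where `ν.restrict Gᶜ ≤ ρ`; since `G`
lies in `closure Γ`, transporting it costs at least the squared distance to `Γ`. -/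
theorem ofReal_cube_div_le_lintegral_of_subset_closure (hγ : IsCoupling γ μ ν)
    {ρ : Measure (EuclideanSpace ℝ (Fin d))} {Γ G : Set (EuclideanSpace ℝ (Fin d))} {c m : ℝ}
    (hc : 0 < c) (hG : MeasurableSet G) (hGΓ : G ⊆ closure Γ) (hνρ : ν.restrict Gᶜ ≤ ρ)
    (hlayer : ∀ t, 0 < t → ρ {x | infDist x Γ ≤ t} ≤ ENNReal.ofReal (c * t))
    (hm : ENNReal.ofReal m ≤ μ G - ν G) :
    ENNReal.ofReal (m ^ 3 / (8 * c ^ 2)) ≤ ∫⁻ z, ENNReal.ofReal (dist z.1 z.2 ^ 2) ∂γ := by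
  set σ := (γ.restrict (G ×ˢ Gᶜ)).map Prod.snd
  have hσν : σ ≤ ν.restrict Gᶜ := by
    refine Measure.le_iff.2 fun A hA => ?_
    rw [Measure.map_apply measurable_snd hA, Measure.restrict_apply (measurable_snd hA),
      Measure.restrict_apply hA, ← hγ.apply_univ_prod (hA.inter hG.compl)]
    exact measure_mono fun z ⟨hz, _, hz'⟩ => ⟨trivial, hz, hz'⟩
  have hσ : ENNReal.ofReal m ≤ σ univ := by
    rw [Measure.map_apply measurable_snd .univ, preimage_univ, Measure.restrict_apply_univ]
    exact hm.trans (hγ.sub_le_apply_prod_compl hG)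
  calc ENNReal.ofReal (m ^ 3 / (8 * c ^ 2))
      ≤ ∫⁻ y, ENNReal.ofReal (infDist y Γ ^ 2) ∂σ :=
        ofReal_cube_div_le_lintegral_sq hc (continuous_infDist_pt Γ).measurable
          (hσν.trans hνρ) hlayer hσ
    _ = ∫⁻ z in G ×ˢ Gᶜ, ENNReal.ofReal (infDist z.2 Γ ^ 2) ∂γ :=
        lintegral_map (by fun_prop) measurable_snd
    _ ≤ ∫⁻ z in G ×ˢ Gᶜ, ENNReal.ofReal (dist z.1 z.2 ^ 2) ∂γ := by
        refine setLIntegral_mono (by fun_prop) fun z hz => ENNReal.ofReal_le_ofReal ?_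
        refine pow_le_pow_left₀ infDist_nonneg ?_ 2
        rw [← infDist_closure, dist_comm]
        exact infDist_le_dist_of_mem (hGΓ hz.1)
    _ ≤ ∫⁻ z, ENNReal.ofReal (dist z.1 z.2 ^ 2) ∂γ := setLIntegral_le_lintegral _ _

/-- `Γ` need not be measurable; we run the transport argument through a measurable hull of `Γ`
inside `closure Γ` on which `μ` and `ν` take the same values as on `Γ`. -/
theorem ofReal_cube_div_le_lintegral_of_isAdmissible [IsFiniteMeasure ν] (hγ : IsCoupling γ μ ν)
    {Ω Γ : Set (EuclideanSpace ℝ (Fin d))} {c : ℝ} (hc : 0 < c) (hν : IsAdmissible Ω Γ ν)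
    (hlayer : ∀ t, 0 < t → volume.restrict Ω {x | infDist x Γ ≤ t} ≤ ENNReal.ofReal (c * t)) :
    ENNReal.ofReal (((μ Γ).toReal - (ν Γ).toReal) ^ 3 / (8 * c ^ 2)) ≤
      ∫⁻ z, ENNReal.ofReal (dist z.1 z.2 ^ 2) ∂γ := by
  obtain ⟨T, hΓT, hT, hμT, hνT⟩ := exists_measurable_superset₂ μ ν Γ
  have hΓG : Γ ⊆ T ∩ closure Γ := subset_inter hΓT subset_closure
  have hG : ∀ κ : Measure (EuclideanSpace ℝ (Fin d)), κ T = κ Γ → κ (T ∩ closure Γ) = κ Γ :=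
    fun κ hκ => le_antisymm ((measure_mono inter_subset_left).trans_eq hκ) (measure_mono hΓG)
  refine hγ.ofReal_cube_div_le_lintegral_of_subset_closure hc (hT.inter measurableSet_closure)
    inter_subset_right (hν.restrict_compl_le hΓG) hlayer ?_
  rw [hG μ hμT, hG ν hνT]
  exact ENNReal.ofReal_le_of_le_toReal (ENNReal.le_toReal_sub (measure_ne_top ν Γ))

theorem abs_cube_div_le_integral [IsFiniteMeasure μ] [IsFiniteMeasure ν] (hγ : IsCoupling γ μ ν)
    {Ω Γ : Set (EuclideanSpace ℝ (Fin d))} {c : ℝ} (hc : 0 < c) (hΩ : Bornology.IsBounded Ω)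
    (hΓΩ : Γ ⊆ closure Ω) (hμ : IsAdmissible Ω Γ μ) (hν : IsAdmissible Ω Γ ν)
    (hlayer : ∀ t, 0 < t → volume.restrict Ω {x | infDist x Γ ≤ t} ≤ ENNReal.ofReal (c * t)) :
    |(μ Γ).toReal - (ν Γ).toReal| ^ 3 / (8 * c ^ 2) ≤ ∫ z, dist z.1 z.2 ^ (2 : ℝ) ∂γ := by
  have hlin : ENNReal.ofReal (|(μ Γ).toReal - (ν Γ).toReal| ^ 3 / (8 * c ^ 2)) ≤
      ∫⁻ z, ENNReal.ofReal (dist z.1 z.2 ^ 2) ∂γ := by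
    rcases abs_choice ((μ Γ).toReal - (ν Γ).toReal) with h | h <;> rw [h]
    · exact hγ.ofReal_cube_div_le_lintegral_of_isAdmissible hc hν hlayer
    · rw [neg_sub, ← lintegral_dist_sq_map_swap]
      exact hγ.swap.ofReal_cube_div_le_lintegral_of_isAdmissible hc hμ hlayer
  have hint := hγ.integrable_dist_sq hΩ.closure (hμ.measure_compl_closure hΓΩ)
    (hν.measure_compl_closure hΓΩ)
  simp only [Real.rpow_two]
  rwa [← ENNReal.ofReal_le_ofReal_iff (integral_nonneg fun _ => by positivity),
    ofReal_integral_eq_lintegral_ofReal hint (ae_of_all _ fun _ => by positivity)]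

end IsCoupling

theorem rpow_one_div_le_wass {d : ℕ} {μ ν : Measure (EuclideanSpace ℝ (Fin d))}
    [IsProbabilityMeasure μ] [IsProbabilityMeasure ν] {p b : ℝ} (hp : 0 ≤ p) (hb : 0 ≤ b)
    (h : ∀ γ, IsCoupling γ μ ν → b ≤ ∫ z, dist z.1 z.2 ^ p ∂γ) : b ^ (1 / p) ≤ Wass p μ ν :=
  le_csInf ⟨_, μ.prod ν, ⟨Measure.fst_prod, Measure.snd_prod⟩, rfl⟩
    fun _ ⟨γ, hγ, hγc⟩ => hγc ▸ Real.rpow_le_rpow hb (h γ hγ) (by positivity)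

theorem le_mul_rpow_of_rpow_cube_div_le {E k W : ℝ} (hE : 0 ≤ E) (hk : 0 < k)
    (h : (E ^ 3 / k) ^ (1 / 2 : ℝ) ≤ W) : E ≤ k ^ (1 / 3 : ℝ) * W ^ (2 / 3 : ℝ) :=
  calc E = (k * (E ^ 3 / k)) ^ (1 / 3 : ℝ) := by
        rw [mul_div_cancel₀ _ hk.ne', ← Real.rpow_natCast, ← Real.rpow_mul hE]; norm_num
    _ = k ^ (1 / 3 : ℝ) * ((E ^ 3 / k) ^ (1 / 2 : ℝ)) ^ (2 / 3 : ℝ) := by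
        rw [Real.mul_rpow hk.le (by positivity), ← Real.rpow_mul (by positivity)]; norm_num
    _ ≤ k ^ (1 / 3 : ℝ) * W ^ (2 / 3 : ℝ) := by gcongr

theorem stmt5_general {d : ℕ} (Ω : Set (EuclideanSpace ℝ (Fin d)))
    (hΩb : Bornology.IsBounded Ω)
    (Γout : Set (EuclideanSpace ℝ (Fin d))) (hΓ : Γout ⊆ frontier Ω)
    (c : ℝ) (hc : 0 < c)
    (hlayer : ∀ t : ℝ, 0 < t →
      (volume {x ∈ Ω | Metric.infDist x Γout ≤ t}).toReal ≤ c * t) :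
    ∃ C : ℝ, 0 < C ∧
      ∀ (μ ν μΩ νΩ μS νS : Measure (EuclideanSpace ℝ (Fin d)))
        (fμ fν : EuclideanSpace ℝ (Fin d) → ℝ≥0∞),
        μ = μΩ + μS → ν = νΩ + νS →
        μΩ = (volume.restrict Ω).withDensity fμ →
        νΩ = (volume.restrict Ω).withDensity fν →
        (∀ᵐ x ∂(volume.restrict Ω), fμ x ≤ 1) →
        (∀ᵐ x ∂(volume.restrict Ω), fν x ≤ 1) →
        μS Γoutᶜ = 0 → νS Γoutᶜ = 0 →
        IsProbabilityMeasure μ → IsProbabilityMeasure ν →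
        |(μ Γout).toReal - (ν Γout).toReal| ≤ C * (Wass 2 μ ν) ^ (2/3 : ℝ) := by
  refine ⟨(8 * c ^ 2) ^ (1 / 3 : ℝ), by positivity, ?_⟩
  intro μ ν μΩ νΩ μS νS fμ fν hμ hν hμΩ hνΩ hfμ hfν hμS hνS _ _
  have hlayer' : ∀ t, 0 < t →
      volume.restrict Ω {x | infDist x Γout ≤ t} ≤ ENNReal.ofReal (c * t) := by
    intro t ht
    rw [Measure.restrict_apply
      (isClosed_le (continuous_infDist_pt _) continuous_const).measurableSet, inter_comm]
    exact (ENNReal.le_ofReal_iff_toReal_le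
      ((measure_mono inter_subset_left).trans_lt hΩb.measure_lt_top).ne (by positivity)).2
      (hlayer t ht)
  refine le_mul_rpow_of_rpow_cube_div_le (abs_nonneg _) (by positivity)
    (rpow_one_div_le_wass zero_le_two (by positivity) fun γ hγ => ?_)
  exact hγ.abs_cube_div_le_integral hc hΩb (hΓ.trans frontier_subset_closure)
    (.of_withDensity hμ hμΩ hfμ hμS) (.of_withDensity hν hνΩ hfν hνS) hlayer'

theorem stmt5 {d : ℕ} (Ω : Set (EuclideanSpace ℝ (Fin d)))
    (hΩo : IsOpen Ω) (hΩb : Bornology.IsBounded Ω)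
    (Γout : Set (EuclideanSpace ℝ (Fin d))) (hΓ : Γout ⊆ frontier Ω)
    (c : ℝ) (hc : 0 < c)
    (hlayer : ∀ t : ℝ, 0 < t →
      (volume {x ∈ Ω | Metric.infDist x Γout ≤ t}).toReal ≤ c * t) :
    ∃ C : ℝ, 0 < C ∧
      ∀ (μ ν μΩ νΩ μS νS : Measure (EuclideanSpace ℝ (Fin d)))
        (fμ fν : EuclideanSpace ℝ (Fin d) → ℝ≥0∞),
        μ = μΩ + μS → ν = νΩ + νS →
        μΩ = (volume.restrict Ω).withDensity fμ →
        νΩ = (volume.restrict Ω).withDensity fν →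
        (∀ᵐ x ∂(volume.restrict Ω), fμ x ≤ 1) →
        (∀ᵐ x ∂(volume.restrict Ω), fν x ≤ 1) →
        μS Γoutᶜ = 0 → νS Γoutᶜ = 0 →
        IsProbabilityMeasure μ → IsProbabilityMeasure ν →
        |(μ Γout).toReal - (ν Γout).toReal| ≤ C * (Wass 2 μ ν) ^ (2/3 : ℝ) :=
  stmt5_general Ω hΩb Γout hΓ c hc hlayer
end

section
/- The map M ↦ 1/det(M) is convex on the set of symmetric positive definite d×d matrices. -/
/-! The determinant is log-concave on positive definite matrices. Writing
`(1 - t) M + t N = S ((1 - t) 1 + t C) S` with `S = √M` and `C = S⁻¹ N S⁻¹ ⪰ 0`, the middle factor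
has determinant `∏ ((1 - t) + t λᵢ) ≥ ∏ λᵢ ^ t = (det C) ^ t` by Bernoulli's inequality on the
eigenvalues `λᵢ` of `C`, whence `det ((1 - t) M + t N) ≥ (det M) ^ (1 - t) (det N) ^ t`. Inverting
and applying the weighted AM-GM inequality to `(det M)⁻¹` and `(det N)⁻¹` gives the convexity. -/

namespace Matrix

variable {n : Type*} [Fintype n] [DecidableEq n]

theorem IsHermitian.det_cfc {𝕜 : Type*} [RCLike 𝕜] {A : Matrix n n 𝕜} (hA : A.IsHermitian)
    (f : ℝ → ℝ) : (cfc f A).det = ∏ i, (f (hA.eigenvalues i) : 𝕜) := by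
  rw [hA.cfc_eq]
  simp [IsHermitian.cfc, -Unitary.conjStarAlgAut_apply]

theorem IsHermitian.det_smul_one_add_smul {A : Matrix n n ℝ} (hA : A.IsHermitian) (a b : ℝ) :
    (a • 1 + b • A).det = ∏ i, (a + b * hA.eigenvalues i) := by
  have : a • 1 + b • A = cfc (fun x ↦ a + b * x) A := by
    rw [cfc_const_add a (fun x ↦ b * x) A, cfc_const_mul_id b A, Algebra.algebraMap_eq_smul_one]
  rw [this, hA.det_cfc]
  rfl

theorem PosSemidef.det_rpow_le_det_one_sub_smul_one_add_smul {A : Matrix n n ℝ}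
    (hA : A.PosSemidef) {t : ℝ} (ht₀ : 0 ≤ t) (ht₁ : t ≤ 1) :
    A.det ^ t ≤ ((1 - t) • 1 + t • A).det := by
  rw [hA.isHermitian.det_smul_one_add_smul, hA.isHermitian.det_eq_prod_eigenvalues]
  simp only [RCLike.ofReal_real_eq_id, id_eq]
  rw [← Real.finsetProd_rpow _ _ fun i _ ↦ hA.eigenvalues_nonneg i]
  refine Finset.prod_le_prod (fun i _ ↦ Real.rpow_nonneg (hA.eigenvalues_nonneg i) t) fun i _ ↦ ?_
  -- Bernoulli's inequality at `1 + (λ - 1)`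
  have h := rpow_one_add_le_one_add_mul_self (s := hA.isHermitian.eigenvalues i - 1)
    (by linarith [hA.eigenvalues_nonneg i]) ht₀ ht₁
  rw [add_sub_cancel] at h
  linarith

open scoped MatrixOrder in
theorem PosDef.det_rpow_mul_det_rpow_le_det_one_sub_smul_add_smul {A B : Matrix n n ℝ}
    (hA : A.PosDef) (hB : B.PosSemidef) {t : ℝ} (ht₀ : 0 ≤ t) (ht₁ : t ≤ 1) :
    A.det ^ (1 - t) * B.det ^ t ≤ ((1 - t) • A + t • B).det := by
  set S := CFC.sqrt A
  have hS : S.IsHermitian := (nonneg_iff_posSemidef.mp (CFC.sqrt_nonneg A)).isHermitian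
  have hSS : S * S = A := CFC.sqrt_mul_sqrt_self A hA.posSemidef.nonneg
  have hdetS : S.det * S.det = A.det := by rw [← det_mul, hSS]
  have hSunit : IsUnit S.det := by
    refine isUnit_iff_ne_zero.mpr fun h ↦ hA.det_pos.ne' ?_
    rw [← hdetS, h, zero_mul]
  set C := S⁻¹ * B * S⁻¹
  have hC : C.PosSemidef := by
    have := hB.conjTranspose_mul_mul_same S⁻¹
    rwa [hS.inv.eq] at this
  have hSCS : S * C * S = B := by
    simp only [C, ← mul_assoc, mul_nonsing_inv _ hSunit, one_mul]
    rw [mul_assoc, nonsing_inv_mul _ hSunit, mul_one]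
  clear_value C
  have hdetC : A.det * C.det = B.det := by
    calc A.det * C.det = (S * C * S).det := by rw [det_mul, det_mul, ← hdetS]; ring
      _ = B.det := by rw [hSCS]
  have hcomb : (1 - t) • A + t • B = S * ((1 - t) • 1 + t • C) * S := by
    rw [Matrix.mul_add, Matrix.add_mul, mul_smul_comm, smul_mul_assoc, mul_smul_comm,
      smul_mul_assoc, mul_one, hSS, hSCS]
  calc A.det ^ (1 - t) * B.det ^ t = A.det * C.det ^ t := by
        rw [← hdetC, Real.mul_rpow hA.det_pos.le hC.det_nonneg, ← mul_assoc,
          ← Real.rpow_add hA.det_pos, sub_add_cancel, Real.rpow_one]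
    _ ≤ A.det * ((1 - t) • 1 + t • C).det :=
        mul_le_mul_of_nonneg_left (hC.det_rpow_le_det_one_sub_smul_one_add_smul ht₀ ht₁)
          hA.det_pos.le
    _ = ((1 - t) • A + t • B).det := by rw [hcomb, det_mul, det_mul, ← hdetS]; ring

end Matrix

theorem stmt9 {d : ℕ} (M N : Matrix (Fin d) (Fin d) ℝ)
    (hM : M.PosDef) (hN : N.PosDef) (t : ℝ) (ht : t ∈ Set.Icc (0:ℝ) 1) :
    ((1 - t) • M + t • N).det⁻¹ ≤ (1 - t) * M.det⁻¹ + t * N.det⁻¹ := by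
  obtain ⟨ht₀, ht₁⟩ := ht
  have hM₀ := hM.det_pos
  have hN₀ := hN.det_pos
  calc ((1 - t) • M + t • N).det⁻¹ ≤ (M.det ^ (1 - t) * N.det ^ t)⁻¹ :=
        inv_anti₀ (by positivity)
          (hM.det_rpow_mul_det_rpow_le_det_one_sub_smul_add_smul hN.posSemidef ht₀ ht₁)
    _ = M.det⁻¹ ^ (1 - t) * N.det⁻¹ ^ t := by
        rw [mul_inv, Real.inv_rpow hM₀.le, Real.inv_rpow hN₀.le]
    _ ≤ (1 - t) * M.det⁻¹ + t * N.det⁻¹ :=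
        Real.geom_mean_le_arith_mean2_weighted (by linarith) ht₀ (inv_nonneg.mpr hM₀.le)
          (inv_nonneg.mpr hN₀.le) (by ring)
end
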